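/- arXiv:2209.13205 — 4 statements merged into one kernel-verified Lean document; each statement's English description precedes it below -/
import Mathlib

section
/- Let U ⊆ ℂ be open, λ ∈ U, and let T : ℂ → Matrix (Fin n) (Fin n) ℂ be analytic on U with T(z) invertible for every z ∈ U \ {λ}. Then for every v ∈ ℂ^n there exist an integer N ≥ 0, vectors r_1, …, r_N ∈ ℂ^n, an open neighborhood Z ⊆ U of λ, and an analytic function s : Z → ℂ^n such that T(z)^{-1} v = s(z) + Σ_{k=1}^N r_k/(z − λ)^k for all z ∈ Z \ {λ}; moreover, if N ≥ 1 then T(λ) r_N = 0, i.e., the highest-order residue, when nonzero, is an eigenvector of the nonlinear eigenproblem T(λ)w = 0. -/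
/-!
By Cramer's rule `T(z)⁻¹ v = det T(z)⁻¹ • cramer (T z) v` is meromorphic at `λ`, so
`h(z) = (z - λ)^m • T(z)⁻¹ v` is analytic at `λ` for some `m`. Expanding `h` to order `m` with
iterated difference quotients, `h(z) = ∑_{j<m} (z - λ)^j c_j + (z - λ)^m s(z)`, and dividing by
`(z - λ)^m` gives the principal part, whose top coefficient is `c_0 = h(λ)`. Finally
`T(z) h(z) = (z - λ)^m v` away from `λ`, and both sides are continuous at `λ`, so
`T(λ) h(λ) = 0` when `m ≥ 1`.
-/

open Matrix Filter Topology Function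

section DSlope

variable {𝕜 : Type*} [NontriviallyNormedField 𝕜] {E : Type*} [NormedAddCommGroup E]
  [NormedSpace 𝕜 E]

theorem eq_sum_pow_smul_iterate_dslope_add (f : 𝕜 → E) (a b : 𝕜) (n : ℕ) :
    f b = ∑ k ∈ Finset.range n, (b - a) ^ k • (swap dslope a)^[k] f a
      + (b - a) ^ n • (swap dslope a)^[n] f b := by
  induction n with
  | zero => simp
  | succ n ih =>
    have hstep : (b - a) • (swap dslope a)^[n + 1] f b
        = (swap dslope a)^[n] f b - (swap dslope a)^[n] f a := by
      rw [iterate_succ_apply']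
      exact sub_smul_dslope _ a b
    rw [Finset.sum_range_succ, pow_succ, mul_smul, hstep, add_assoc, ← smul_add,
      add_sub_cancel]
    exact ih

theorem inv_pow_smul_eq_iterate_dslope_add_sum (g : 𝕜 → E) {a b : 𝕜} (hb : b ≠ a) (n : ℕ) :
    ((b - a) ^ n)⁻¹ • g b = (swap dslope a)^[n] g b
      + ∑ k : Fin n, ((b - a) ^ (k.1 + 1))⁻¹ • (swap dslope a)^[n - 1 - k] g a := by
  have hba : b - a ≠ 0 := sub_ne_zero.mpr hb
  rw [eq_sum_pow_smul_iterate_dslope_add g a b n, smul_add, smul_smul,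
    inv_mul_cancel₀ (pow_ne_zero _ hba), one_smul, add_comm, Finset.smul_sum,
    ← Finset.sum_range_reflect, Fin.sum_univ_eq_sum_range
      (fun k => ((b - a) ^ (k + 1))⁻¹ • (swap dslope a)^[n - 1 - k] g a)]
  refine congrArg _ (Finset.sum_congr rfl fun k hk => ?_)
  have hkn : k < n := Finset.mem_range.mp hk
  have hsplit : (b - a) ^ n = (b - a) ^ (k + 1) * (b - a) ^ (n - 1 - k) := by
    rw [← pow_add]; congr 1; omega
  rw [smul_smul, hsplit, mul_inv, mul_assoc, inv_mul_cancel₀ (pow_ne_zero _ hba), mul_one]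

theorem AnalyticAt.iterate_dslope {f : 𝕜 → E} {a : 𝕜} (hf : AnalyticAt 𝕜 f a) (n : ℕ) :
    AnalyticAt 𝕜 ((swap dslope a)^[n] f) a :=
  let ⟨_, hp⟩ := hf
  (hp.has_fpower_series_iterate_dslope_fslope n).analyticAt

end DSlope

section MatrixFunctions

variable {𝕜 : Type*} [NontriviallyNormedField 𝕜] {ι : Type*} [Fintype ι]
  {M : 𝕜 → Matrix ι ι 𝕜} {x : 𝕜}

theorem analyticAt_matrix_det [DecidableEq ι] (hM : ∀ i j, AnalyticAt 𝕜 (fun z => M z i j) x) :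
    AnalyticAt 𝕜 (fun z => (M z).det) x := by
  simp_rw [det_apply']
  exact Finset.analyticAt_fun_sum _ fun σ _ =>
    analyticAt_const.mul (Finset.analyticAt_fun_prod _ fun i _ => hM (σ i) i)

theorem analyticAt_matrix_cramer [DecidableEq ι]
    (hM : ∀ i j, AnalyticAt 𝕜 (fun z => M z i j) x) (v : ι → 𝕜) :
    AnalyticAt 𝕜 (fun z => cramer (M z) v) x := by
  refine AnalyticAt.pi fun i => ?_
  simp_rw [cramer_apply]
  refine analyticAt_matrix_det fun k l => ?_
  by_cases hl : l = i
  · subst hl; simpa only [updateCol_self] using analyticAt_const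
  · simpa only [updateCol_ne hl] using hM k l

theorem meromorphicAt_matrix_inv_mulVec [DecidableEq ι]
    (hM : ∀ i j, AnalyticAt 𝕜 (fun z => M z i j) x) (v : ι → 𝕜) :
    MeromorphicAt (fun z => (M z)⁻¹ *ᵥ v) x := by
  have hcramer (z : 𝕜) : (M z)⁻¹ *ᵥ v = (M z).det⁻¹ • cramer (M z) v := by
    rw [inv_def, Ring.inverse_eq_inv', smul_mulVec, cramer_eq_adjugate_mulVec]
  simp_rw [hcramer]
  exact (analyticAt_matrix_det hM).meromorphicAt.inv.smul
    (analyticAt_matrix_cramer hM v).meromorphicAt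

theorem continuousAt_matrix_mulVec (hM : ∀ i j, ContinuousAt (fun z => M z i j) x)
    {h : 𝕜 → ι → 𝕜} (hh : ContinuousAt h x) : ContinuousAt (fun z => M z *ᵥ h z) x := by
  refine continuousAt_pi.mpr fun i => ?_
  simp only [mulVec, dotProduct]
  exact tendsto_finsetSum _ fun j _ => (hM i j).mul (continuousAt_pi.mp hh j)

end MatrixFunctions

/-- Keldysh-type theorem: near an isolated singular point `lam` of an analytic
matrix-valued function `T`, the function `z ↦ T(z)⁻¹ v` splits into an analytic part
plus a finite principal part, and the highest-order residue is annihilated by `T lam`. -/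
theorem keldysh_principal_part (n : ℕ) (U : Set ℂ) (hU : IsOpen U) (lam : ℂ) (hlam : lam ∈ U)
    (T : ℂ → Matrix (Fin n) (Fin n) ℂ)
    (hT : ∀ i j, AnalyticOnNhd ℂ (fun z => T z i j) U)
    (hinv : ∀ z ∈ U \ {lam}, IsUnit (T z)) (v : Fin n → ℂ) :
    ∃ (N : ℕ) (r : Fin N → Fin n → ℂ) (Z : Set ℂ) (s : ℂ → Fin n → ℂ),
      IsOpen Z ∧ lam ∈ Z ∧ Z ⊆ U ∧ AnalyticOnNhd ℂ s Z ∧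
      (∀ z ∈ Z \ {lam},
        (T z)⁻¹ *ᵥ v = s z + ∑ k : Fin N, ((z - lam) ^ (k.1 + 1))⁻¹ • r k) ∧
      (∀ hN : 0 < N, T lam *ᵥ r ⟨N - 1, Nat.sub_lt hN Nat.one_pos⟩ = 0) := by
  have hTlam i j := hT i j lam hlam
  obtain ⟨m, hh⟩ := meromorphicAt_matrix_inv_mulVec hTlam v
  set h : ℂ → Fin n → ℂ := fun z => (z - lam) ^ m • (T z)⁻¹ *ᵥ v
  set s := (swap dslope lam)^[m] h
  refine ⟨m, fun k => (swap dslope lam)^[m - 1 - k] h lam, U ∩ {z | AnalyticAt ℂ s z}, s,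
    hU.inter (isOpen_analyticAt ℂ s), ⟨hlam, hh.iterate_dslope m⟩, Set.inter_subset_left,
    fun z hz => hz.2, fun z hz => ?_, fun hm => ?_⟩
  · rw [← inv_pow_smul_eq_iterate_dslope_add_sum h hz.2 m, smul_smul,
      inv_mul_cancel₀ (pow_ne_zero _ (sub_ne_zero.mpr hz.2)), one_smul]
  · have hsolve : ∀ᶠ z in 𝓝[≠] lam, T z *ᵥ h z = (z - lam) ^ m • v := by
      filter_upwards [sdiff_mem_nhdsWithin_compl (hU.mem_nhds hlam) {lam}] with z hz
      rw [mulVec_smul, mulVec_mulVec,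
        mul_nonsing_inv _ ((isUnit_iff_isUnit_det _).mp (hinv z hz)), one_mulVec]
    have hcont : ContinuousAt (fun z => T z *ᵥ h z) lam :=
      continuousAt_matrix_mulVec (fun i j => (hTlam i j).continuousAt) hh.continuousAt
    have hzero := ((hcont.eventuallyEq_nhds_iff_eventuallyEq_nhdsNE
      (g := fun z => (z - lam) ^ m • v) (by fun_prop)).mp hsolve).self_of_nhds
    simpa [Nat.sub_self, zero_pow hm.ne'] using hzero
end

section
/- For every λ ∈ ℂ, det(λB − A) = − Σ_{j=1}^S q_j Π_{j'≠j} (λ − z_{j'}). In particular, whenever z ∉ {z_1,…,z_S}, det(zB − A) = − d(z) · Π_{j=1}^S (z − z_j), where d(z) = Σ_{j=1}^S q_j/(z − z_j). -/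
open Matrix

/-- Determinant of the arrowhead pencil associated with a barycentric rational function:
`det (λ B - A) = -∑ j, q j * ∏_{j' ≠ j} (λ - z j')`; in particular, away from the support
points, `det (z B - A) = -d(z) * ∏ j, (z - z j)` with `d(z) = ∑ j, q j / (z - z j)`. -/
theorem arrowhead_pencil_det (S : ℕ) (hS : 1 ≤ S)
    (z : Fin S → ℂ) (hz : Function.Injective z)
    (q : Fin S → ℂ)
    (A B : Matrix (Fin (S + 1)) (Fin (S + 1)) ℂ)
    (hA : A = Matrix.of (Fin.cases (Fin.cases 0 fun j => q j)
        (fun i => Fin.cases 1 fun k => if i = k then z i else 0)))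
    (hB : B = Matrix.diagonal (Fin.cases 0 fun _ => 1)) :
    (∀ l : ℂ, (l • B - A).det
        = -∑ j, q j * ∏ j' ∈ Finset.univ.erase j, (l - z j')) ∧
    (∀ w : ℂ, (∀ j, w ≠ z j) →
      (w • B - A).det = -((∑ j, q j / (w - z j)) * ∏ j, (w - z j))) := by
  obtain ⟨T, rfl⟩ : ∃ T, S = T + 1 := ⟨S - 1, (Nat.succ_pred_eq_of_pos hS).symm⟩
  have h00 : ∀ l : ℂ, (l • B - A) 0 0 = 0 := by
    intro l; subst hA hB; simp
  have h0s : ∀ (l : ℂ) (j : Fin (T + 1)), (l • B - A) 0 j.succ = -q j := by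
    intro l j; subst hA hB
    simp [Matrix.diagonal_apply, (Fin.succ_ne_zero j).symm]
  have hs0 : ∀ (l : ℂ) (i : Fin (T + 1)), (l • B - A) i.succ 0 = -1 := by
    intro l i; subst hA hB
    simp [Matrix.diagonal_apply, Fin.succ_ne_zero i]
  have hss : ∀ (l : ℂ) (i k : Fin (T + 1)),
      (l • B - A) i.succ k.succ = if i = k then l - z i else 0 := by
    intro l i k; subst hA hB
    rcases eq_or_ne i k with rfl | h
    · simp
    · simp [Matrix.diagonal_apply, h, Fin.succ_inj, Matrix.of_apply]
  have herase : ∀ (j : Fin (T + 1)) (f : Fin (T + 1) → ℂ),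
      (∏ i : Fin T, f (j.succAbove i)) = ∏ j' ∈ Finset.univ.erase j, f j' := by
    intro j f
    refine Finset.prod_nbij (fun i => j.succAbove i)
      (fun a _ => ?_)
      (fun a _ b _ h => Fin.succAbove_right_injective h)
      (fun x hx => ?_) (fun a _ => rfl)
    · simp [Fin.succAbove_ne]
    · obtain ⟨i, hi⟩ := Fin.exists_succAbove_eq (Finset.ne_of_mem_erase hx)
      exact ⟨i, Finset.mem_univ i, hi⟩
  have key : ∀ l : ℂ, (l • B - A).det
      = -∑ j, q j * ∏ j' ∈ Finset.univ.erase j, (l - z j') := by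
    intro l
    have hdetN : ∀ j : Fin (T + 1),
        det ((l • B - A).submatrix Fin.succ (Fin.succ j).succAbove)
          = (-1 : ℂ) ^ (j : ℕ) * (-1) * ∏ j' ∈ Finset.univ.erase j, (l - z j') := by
      intro j
      rw [Matrix.det_succ_row _ j, Fin.sum_univ_succ]
      have hz0 : ∀ k : Fin T,
          (-1 : ℂ) ^ ((j : ℕ) + ((k.succ : Fin (T + 1)) : ℕ)) *
            ((l • B - A).submatrix Fin.succ (Fin.succ j).succAbove) j k.succ *
            det (((l • B - A).submatrix Fin.succ (Fin.succ j).succAbove).submatrix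
              j.succAbove k.succ.succAbove) = 0 := by
        intro k
        have : ((l • B - A).submatrix Fin.succ (Fin.succ j).succAbove) j k.succ = 0 := by
          rw [Matrix.submatrix_apply, Fin.succ_succAbove_succ, hss]
          exact if_neg (Fin.ne_succAbove j k)
        rw [this]; ring
      rw [Finset.sum_congr rfl (fun k _ => hz0 k), Finset.sum_const, smul_zero, add_zero]
      have hval : ((l • B - A).submatrix Fin.succ (Fin.succ j).succAbove) j 0 = -1 := by
        rw [Matrix.submatrix_apply, Fin.succ_succAbove_zero, hs0]
      have hPdiag : ((l • B - A).submatrix Fin.succ (Fin.succ j).succAbove).submatrix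
          j.succAbove (0 : Fin (T + 1)).succAbove
          = Matrix.diagonal (fun i => l - z (j.succAbove i)) := by
        ext i k
        rw [Matrix.submatrix_apply, Matrix.submatrix_apply, Fin.succAbove_zero,
          Fin.succ_succAbove_succ, hss]
        rcases eq_or_ne i k with rfl | h
        · simp [Matrix.diagonal_apply_eq]
        · rw [if_neg (fun hc => h (Fin.succAbove_right_injective hc)),
            Matrix.diagonal_apply_ne _ h]
      rw [hval, hPdiag, Matrix.det_diagonal, herase j (fun j' => l - z j')]
      simp
    have hterm : ∀ j : Fin (T + 1),
        (-1 : ℂ) ^ ((j.succ : Fin (T + 2)) : ℕ) * (l • B - A) 0 j.succ *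
          det ((l • B - A).submatrix Fin.succ (Fin.succ j).succAbove)
          = -(q j * ∏ j' ∈ Finset.univ.erase j, (l - z j')) := by
      intro j
      rw [h0s, hdetN]
      have he : (-1 : ℂ) ^ ((j.succ : Fin (T + 2)) : ℕ) = (-1) ^ (j : ℕ) * (-1) := by
        rw [Fin.val_succ, pow_succ]
      rw [he]
      have h2 : (-1 : ℂ) ^ (j : ℕ) * (-1) ^ (j : ℕ) = 1 := by
        rw [← pow_add]
        exact Even.neg_one_pow ⟨j, rfl⟩
      calc (-1 : ℂ) ^ (j : ℕ) * (-1) * -q j *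
          ((-1) ^ (j : ℕ) * (-1) * ∏ j' ∈ Finset.univ.erase j, (l - z j'))
          = ((-1 : ℂ) ^ (j : ℕ) * (-1) ^ (j : ℕ)) *
            (-(q j * ∏ j' ∈ Finset.univ.erase j, (l - z j'))) := by ring
        _ = -(q j * ∏ j' ∈ Finset.univ.erase j, (l - z j')) := by rw [h2, one_mul]
    rw [Matrix.det_succ_row_zero, Fin.sum_univ_succ, h00,
      Finset.sum_congr rfl (fun j _ => hterm j), ← Finset.sum_neg_distrib]
    ring
  refine ⟨key, fun w hw => ?_⟩
  rw [key w, neg_inj, Finset.sum_mul]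
  refine Finset.sum_congr rfl fun j _ => ?_
  have hne : w - z j ≠ 0 := sub_ne_zero.mpr (hw j)
  rw [← Finset.mul_prod_erase _ _ (Finset.mem_univ j)]
  field_simp
end

section
/- If (q_1, …, q_S) ≠ (0, …, 0), then the arrowhead pencil has at most S − 1 finite eigenvalues: the set {λ ∈ ℂ : det(λB − A) = 0} contains at most S − 1 elements. -/
open Matrix Polynomial Finset

lemma det_arrowhead (S : ℕ) (z q : Fin S → ℂ) (l : ℂ) (hl : ∀ j, l - z j ≠ 0)
    (A B : Matrix (Fin (S + 1)) (Fin (S + 1)) ℂ)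
    (hA : A = Matrix.of (Fin.cases (Fin.cases 0 fun j => q j)
        (fun i => Fin.cases 1 fun k => if i = k then z i else 0)))
    (hB : B = Matrix.diagonal (Fin.cases 0 fun _ => 1)) :
    (l • B - A).det = (∏ k, (l - z k)) * (- ∑ j, q j * (l - z j)⁻¹) := by
  classical
  set d : Fin S → ℂ := fun i => l - z i with hd
  let e : Fin (S + 1) ≃ Fin S ⊕ PUnit.{1} :=
    (finSuccEquiv S).trans (Equiv.optionEquivSumPUnit _)
  have hsub : (l • B - A).submatrix e.symm e.symm =
      fromBlocks (diagonal d) (Matrix.of fun _ _ => (-1 : ℂ))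
        (Matrix.of fun _ j => -q j) 0 := by
    ext i j
    have h0 : e.symm (Sum.inr PUnit.unit) = 0 := by
      simp [e, Equiv.optionEquivSumPUnit]
    have hs : ∀ i : Fin S, e.symm (Sum.inl i) = i.succ := by
      intro i; simp [e, Equiv.optionEquivSumPUnit]
    cases i with
    | inl i =>
      cases j with
      | inl k =>
        simp only [submatrix_apply, hs, fromBlocks_apply₁₁, hA, hB, Matrix.sub_apply,
          Matrix.smul_apply, Matrix.of_apply, Fin.cases_succ, smul_eq_mul]
        rcases eq_or_ne i k with rfl | h
        · simp [diagonal, d]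
        · have : i.succ ≠ k.succ := fun hc => h (Fin.succ_injective _ hc)
          simp [diagonal, h, this]
      | inr k =>
        simp [submatrix_apply, hs, h0, hA, hB, Matrix.sub_apply, Fin.succ_ne_zero,
          diagonal_apply_ne]
    | inr i =>
      cases j with
      | inl k =>
        simp [submatrix_apply, hs, h0, hA, hB, Matrix.sub_apply,
          (Fin.succ_ne_zero k).symm, diagonal_apply_ne]
      | inr k =>
        simp [submatrix_apply, h0, hA, hB]
  have hdet := det_submatrix_equiv_self e.symm (l • B - A)
  rw [← hdet, hsub]
  have hdinv : diagonal d * diagonal (fun i => (d i)⁻¹) = 1 := by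
    rw [diagonal_mul_diagonal]
    convert diagonal_one using 2
    ext i
    exact mul_inv_cancel₀ (hl i)
  have hdinv' : diagonal (fun i => (d i)⁻¹) * diagonal d = 1 := by
    rw [diagonal_mul_diagonal]
    convert diagonal_one using 2
    ext i
    exact inv_mul_cancel₀ (hl i)
  letI : Invertible (diagonal d) := ⟨diagonal (fun i => (d i)⁻¹), hdinv', hdinv⟩
  rw [det_fromBlocks₁₁]
  have hinvOf : ⅟(diagonal d) = diagonal (fun i => (d i)⁻¹) := rfl
  rw [hinvOf, det_diagonal]
  congr 1
  rw [det_unique]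
  simp only [Matrix.sub_apply, Matrix.zero_apply, Matrix.mul_apply, Matrix.of_apply,
    diagonal, Matrix.of_apply]
  rw [zero_sub, neg_inj]
  refine Finset.sum_congr rfl fun x _ => ?_
  rw [Finset.sum_eq_single x (by intro b _ hb; simp [hb]) (by simp)]
  simp [d, mul_comm]

/-- If the barycentric coefficients are not all zero, the arrowhead pencil `(A, B)` has at
most `S - 1` finite eigenvalues. -/
theorem arrowhead_pencil_finite_eigenvalues (S : ℕ) (hS : 1 ≤ S)
    (z : Fin S → ℂ) (hz : Function.Injective z)
    (q : Fin S → ℂ) (hq : q ≠ 0)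
    (A B : Matrix (Fin (S + 1)) (Fin (S + 1)) ℂ)
    (hA : A = Matrix.of (Fin.cases (Fin.cases 0 fun j => q j)
        (fun i => Fin.cases 1 fun k => if i = k then z i else 0)))
    (hB : B = Matrix.diagonal (Fin.cases 0 fun _ => 1)) :
    {l : ℂ | (l • B - A).det = 0}.encard ≤ ((S - 1 : ℕ) : ℕ∞) := by
  classical
  set p : Polynomial ℂ :=
    -∑ j, Polynomial.C (q j) * ∏ k ∈ Finset.univ.erase j, (X - Polynomial.C (z k)) with hp
  -- step 1: off the poles, det = p.eval
  have hpe : ∀ l : ℂ, (∀ j, l - z j ≠ 0) → (l • B - A).det = p.eval l := by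
    intro l hl
    rw [det_arrowhead S z q l hl A B hA hB, hp]
    simp only [eval_neg, eval_finset_sum, eval_mul, eval_C, eval_prod, eval_sub, eval_X,
      mul_neg, neg_neg, neg_inj]
    rw [Finset.mul_sum]
    refine Finset.sum_congr rfl fun j _ => ?_
    rw [← Finset.mul_prod_erase _ _ (Finset.mem_univ j)]
    have hlj := hl j
    field_simp
  -- step 2: polynomial determinant
  set P : Polynomial ℂ :=
    ((X : Polynomial ℂ) • B.map Polynomial.C - A.map Polynomial.C).det with hP
  have hPe : ∀ l : ℂ, P.eval l = (l • B - A).det := by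
    intro l
    have := RingHom.map_det (Polynomial.evalRingHom l)
      ((X : Polynomial ℂ) • B.map Polynomial.C - A.map Polynomial.C)
    rw [hP]
    rw [show Polynomial.eval l P = (Polynomial.evalRingHom l) P from rfl, hP] at *
    rw [this]
    congr 1
    ext i j
    simp only [RingHom.mapMatrix_apply, Matrix.map_apply, Matrix.sub_apply, Matrix.smul_apply,
      smul_eq_mul, eval_sub, eval_mul, eval_X, eval_C, coe_evalRingHom]
  -- step 3: P = p
  have hPp : P = p := by
    rw [← sub_eq_zero]
    apply Polynomial.eq_zero_of_infinite_isRoot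
    have hsub : (Set.range z)ᶜ ⊆ {x | (P - p).IsRoot x} := by
      intro l hl
      have hl' : ∀ j, l - z j ≠ 0 := by
        intro j h
        exact hl ⟨j, (sub_eq_zero.mp h).symm⟩
      simp only [Set.mem_setOf_eq, IsRoot, eval_sub, hPe l, hpe l hl', sub_self]
    exact Set.Infinite.mono hsub ((Set.finite_range z).infinite_compl)
  -- p ≠ 0
  have hp0 : p ≠ 0 := by
    obtain ⟨j0, hj0⟩ : ∃ j, q j ≠ 0 := by
      by_contra h
      push_neg at h
      exact hq (funext h)
    intro h
    have he : p.eval (z j0) = 0 := by rw [h]; simp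
    rw [hp] at he
    simp only [eval_neg, eval_finset_sum, eval_mul, eval_C, eval_prod, eval_sub, eval_X,
      neg_eq_zero] at he
    rw [Finset.sum_eq_single j0] at he
    · rcases mul_eq_zero.mp he with h1 | h1
      · exact hj0 h1
      · obtain ⟨k, hk, hk0⟩ := Finset.prod_eq_zero_iff.mp h1
        exact (Finset.ne_of_mem_erase hk) (hz (sub_eq_zero.mp hk0)).symm
    · intro b _ hb
      apply mul_eq_zero_of_right
      exact Finset.prod_eq_zero (Finset.mem_erase.mpr ⟨hb.symm, Finset.mem_univ _⟩) (by simp)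
    · simp
  -- degree bound
  have hdeg : p.natDegree ≤ S - 1 := by
    rw [hp, natDegree_neg]
    apply Polynomial.natDegree_sum_le_of_forall_le
    intro j _
    calc (Polynomial.C (q j) * ∏ k ∈ Finset.univ.erase j, (X - Polynomial.C (z k))).natDegree
        ≤ (Polynomial.C (q j)).natDegree
          + (∏ k ∈ Finset.univ.erase j, (X - Polynomial.C (z k))).natDegree :=
          natDegree_mul_le
      _ ≤ 0 + ∑ k ∈ Finset.univ.erase j, (X - Polynomial.C (z k)).natDegree := by
          gcongr
          · exact le_of_eq (natDegree_C _)
          · exact natDegree_prod_le _ _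
      _ ≤ S - 1 := by
          simp only [natDegree_X_sub_C, zero_add, Finset.sum_const, smul_eq_mul, mul_one]
          simp [Finset.card_erase_of_mem]
  -- conclude
  have hset : {l : ℂ | (l • B - A).det = 0} = ↑p.roots.toFinset := by
    ext l
    simp only [Set.mem_setOf_eq, Finset.coe_sort_coe, Finset.mem_coe, Multiset.mem_toFinset,
      Polynomial.mem_roots hp0]
    rw [← hPe l, hPp]
    exact Iff.symm Iff.rfl
  rw [hset, Set.encard_coe_eq_coe_finsetCard]
  exact_mod_cast le_trans (Multiset.toFinset_card_le _) (le_trans (Polynomial.card_roots' p) hdeg)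
end

section
/- Suppose T(z) = T_0 + z T_1 with T_0, T_1 ∈ ℂ^{n×n}, let v ∈ ℂ^n, let z_1, …, z_S be distinct points at which T(z_j) is invertible, set u_j = T(z_j)^{-1} v, and let q_1, …, q_S be nonzero complex numbers. Then for every z ∉ {z_1,…,z_S} with d(z) ≠ 0 one has T(z) ũ(z) − v = (1/d(z)) · T_1 (Σ_{j=1}^S q_j u_j); in particular the residual norm satisfies ‖T(z) ũ(z) − v‖₂ = C / |d(z)| with the z-independent constant C = ‖T_1 Σ_{j=1}^S q_j u_j‖₂. -/
open Matrix

/-- For a linear pencil `T(z) = T₀ + z T₁` and interpolatory barycentric surrogate `ũ`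
built from samples `u j = T(z j)⁻¹ v`, the residual satisfies
`T(z) ũ(z) - v = (1/d(z)) T₁ (∑ j, q j • u j)`; in particular its Euclidean norm is
a `z`-independent constant divided by `|d(z)|`. -/
theorem linear_pencil_residual (n S : ℕ) (hn : 1 ≤ n) (hS : 1 ≤ S)
    (T0 T1 : Matrix (Fin n) (Fin n) ℂ)
    (T : ℂ → Matrix (Fin n) (Fin n) ℂ)
    (hT : ∀ w : ℂ, T w = T0 + w • T1)
    (v : EuclideanSpace ℂ (Fin n))
    (z : Fin S → ℂ) (hz : Function.Injective z)
    (hinvT : ∀ j, IsUnit (T (z j)))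
    (q : Fin S → ℂ) (hq : ∀ j, q j ≠ 0)
    (u : Fin S → EuclideanSpace ℂ (Fin n))
    (hu : ∀ j, u j = Matrix.toEuclideanLin (T (z j))⁻¹ v) :
    ∀ w : ℂ, (∀ j, w ≠ z j) → (∑ j, q j / (w - z j)) ≠ 0 →
      Matrix.toEuclideanLin (T w)
          ((∑ j, q j / (w - z j))⁻¹ • ∑ j, (q j / (w - z j)) • u j) - v
        = (∑ j, q j / (w - z j))⁻¹ • Matrix.toEuclideanLin T1 (∑ j, q j • u j) ∧
      ‖Matrix.toEuclideanLin (T w)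
          ((∑ j, q j / (w - z j))⁻¹ • ∑ j, (q j / (w - z j)) • u j) - v‖
        = ‖Matrix.toEuclideanLin T1 (∑ j, q j • u j)‖ / ‖∑ j, q j / (w - z j)‖ := by
  intro w hw hd
  -- T(z j) applied to u j gives v
  have hv : ∀ j, Matrix.toEuclideanLin (T (z j)) (u j) = v := by
    intro j
    rw [hu j]
    have h1 : T (z j) * (T (z j))⁻¹ = 1 :=
      Matrix.mul_nonsing_inv _ ((Matrix.isUnit_iff_isUnit_det _).mp (hinvT j))
    have : Matrix.toEuclideanLin (T (z j) * (T (z j))⁻¹) v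
        = Matrix.toEuclideanLin (T (z j)) (Matrix.toEuclideanLin (T (z j))⁻¹ v) := by
      simp [Matrix.toEuclideanLin_apply, Matrix.mulVec_mulVec]
    rw [← this, h1]
    simp [Matrix.toEuclideanLin_apply]
  -- key identity
  have key : ∀ j, Matrix.toEuclideanLin (T w) (u j)
      = v + (w - z j) • Matrix.toEuclideanLin T1 (u j) := by
    intro j
    have hTw : T w = T (z j) + (w - z j) • T1 := by
      rw [hT w, hT (z j)]
      rw [sub_smul]
      abel
    rw [hTw, map_add, _root_.map_smul, LinearMap.add_apply, LinearMap.smul_apply, hv j]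
  set d := ∑ j, q j / (w - z j) with hdef
  have hmain : Matrix.toEuclideanLin (T w) (d⁻¹ • ∑ j, (q j / (w - z j)) • u j)
      = v + d⁻¹ • Matrix.toEuclideanLin T1 (∑ j, q j • u j) := by
    rw [_root_.map_smul, map_sum]
    have : ∀ j ∈ Finset.univ, Matrix.toEuclideanLin (T w) ((q j / (w - z j)) • u j)
        = (q j / (w - z j)) • v + q j • Matrix.toEuclideanLin T1 (u j) := by
      intro j _
      rw [_root_.map_smul, key j, smul_add, smul_smul]
      congr 2
      field_simp
      exact mul_div_cancel_right₀ _ (sub_ne_zero.mpr (hw j))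
    rw [Finset.sum_congr rfl this, Finset.sum_add_distrib, ← Finset.sum_smul, ← hdef,
      smul_add, smul_smul, inv_mul_cancel₀ hd, one_smul, map_sum]
    congr 1
    rw [Finset.smul_sum, Finset.smul_sum]
    exact Finset.sum_congr rfl fun j _ => by rw [_root_.map_smul]
  have heq : Matrix.toEuclideanLin (T w) (d⁻¹ • ∑ j, (q j / (w - z j)) • u j) - v
      = d⁻¹ • Matrix.toEuclideanLin T1 (∑ j, q j • u j) := by
    rw [hmain]; abel
  refine ⟨heq, ?_⟩
  rw [heq, norm_smul, norm_inv, div_eq_inv_mul]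
end
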